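/- arXiv:1910.09505 — 3 statements merged into one kernel-verified Lean document; each statement's English description precedes it below -/
import Mathlib

section
/- Define H = [[1,1],[1,-1]] and for t ≥ 1 let B_t = (1/2)·H^{⊗t} + (1/2)·J, where H^{⊗t} is the t-fold Kronecker power of H and J is the all-ones matrix of size 2^t × 2^t. Then B_t is invertible. -/
/-- The t-fold Kronecker power of H = [[1,1],[1,-1]], with rows and columns
indexed by Fin t → Fin 2: its (u, z) entry is ∏ i, H (u i) (z i). -/
noncomputable def kronPow (t : ℕ) : Matrix (Fin t → Fin 2) (Fin t → Fin 2) ℝ :=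
  Matrix.of fun u z => ∏ i, (!![1, 1; 1, -1] : Matrix (Fin 2) (Fin 2) ℝ) (u i) (z i)

/-- B_t = (1/2)·H^{⊗t} + (1/2)·J, where J is the all-ones 2^t × 2^t matrix. -/
noncomputable def Bmat (t : ℕ) : Matrix (Fin t → Fin 2) (Fin t → Fin 2) ℝ :=
  (1 / 2 : ℝ) • kronPow t + (1 / 2 : ℝ) • Matrix.of (fun _ _ => (1 : ℝ))

noncomputable def Jmat (t : ℕ) : Matrix (Fin t → Fin 2) (Fin t → Fin 2) ℝ :=
  Matrix.of (fun _ _ => (1 : ℝ))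

noncomputable def Smat (t : ℕ) : Matrix (Fin t → Fin 2) (Fin t → Fin 2) ℝ :=
  Matrix.of (fun u z => if u = 0 ∧ z = 0 then (1 : ℝ) else 0)

noncomputable def Cmat (t : ℕ) : Matrix (Fin t → Fin 2) (Fin t → Fin 2) ℝ :=
  Matrix.of (fun _ z => if z = 0 then (1 : ℝ) else 0)

lemma hadCol (x : Fin 2) : (![![1,1],![1,-1]] : Fin 2 → Fin 2 → ℝ) x 0 = 1 := by
  fin_cases x <;> simp

lemma hadSum (x y : Fin 2) :
    ∑ a : Fin 2, (![![1,1],![1,-1]] : Fin 2 → Fin 2 → ℝ) x a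
      * (![![1,1],![1,-1]] : Fin 2 → Fin 2 → ℝ) a y
      = if x = y then 2 else 0 := by
  fin_cases x <;> fin_cases y <;> norm_num [Fin.sum_univ_two]

lemma hadColSum (y : Fin 2) :
    ∑ a : Fin 2, (![![1,1],![1,-1]] : Fin 2 → Fin 2 → ℝ) a y
      = if y = 0 then 2 else 0 := by
  fin_cases y <;> norm_num [Fin.sum_univ_two]

lemma KK (t : ℕ) : kronPow t * kronPow t = (2 ^ t : ℝ) • 1 := by
  ext u z
  simp only [Matrix.mul_apply, kronPow, Matrix.of_apply]
  simp only [← Finset.prod_mul_distrib]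
  have key := Finset.prod_univ_sum (fun _ : Fin t => (Finset.univ : Finset (Fin 2)))
      (fun i a => (!![1,1;1,-1] : Matrix (Fin 2) (Fin 2) ℝ) (u i) a
        * (!![1,1;1,-1] : Matrix (Fin 2) (Fin 2) ℝ) a (z i))
  rw [Fintype.piFinset_univ] at key
  simp only [Matrix.of_apply] at key
  rw [← key]
  simp only [hadSum]
  by_cases h : u = z
  · subst h
    simp [Matrix.smul_apply, Matrix.one_apply]
  · obtain ⟨i, hi⟩ := Function.ne_iff.mp h
    rw [Finset.prod_eq_zero (Finset.mem_univ i) (by simp [hi])]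
    simp [Matrix.smul_apply, Matrix.one_apply, Ne.symm h, h]

lemma JK (t : ℕ) : Jmat t * kronPow t = (2 ^ t : ℝ) • Cmat t := by
  ext u z
  simp only [Matrix.mul_apply, kronPow, Jmat, Cmat, Matrix.of_apply, one_mul,
    Matrix.smul_apply, smul_eq_mul]
  have key := Finset.prod_univ_sum (fun _ : Fin t => (Finset.univ : Finset (Fin 2)))
      (fun i a => (!![1,1;1,-1] : Matrix (Fin 2) (Fin 2) ℝ) a (z i))
  rw [Fintype.piFinset_univ] at key
  simp only [Matrix.of_apply] at key
  rw [← key]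
  simp only [hadColSum]
  by_cases h : z = 0
  · subst h
    simp
  · obtain ⟨i, hi⟩ := Function.ne_iff.mp h
    rw [Finset.prod_eq_zero (Finset.mem_univ i)
      (by simp [show z i ≠ 0 by simpa using hi])]
    simp [h]

lemma KS (t : ℕ) : kronPow t * Smat t = Cmat t := by
  ext u z
  simp only [Matrix.mul_apply, kronPow, Smat, Cmat, Matrix.of_apply]
  by_cases h : z = 0
  · subst h
    simp only [and_true]
    rw [Finset.sum_eq_single (0 : Fin t → Fin 2)]
    · simp [hadCol]
      exact Finset.prod_eq_one fun x _ => by generalize u x = a; fin_cases a <;> simp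
    · intro b _ hb; simp [hb]
    · simp
  · simp [h]

lemma JS (t : ℕ) : Jmat t * Smat t = Cmat t := by
  ext u z
  simp only [Matrix.mul_apply, Jmat, Smat, Cmat, Matrix.of_apply, one_mul]
  by_cases h : z = 0
  · subst h
    simp only [and_true]
    rw [Finset.sum_eq_single (0 : Fin t → Fin 2)]
    · simp
    · intro b _ hb; simp [hb]
    · simp
  · simp [h]

/-- For t ≥ 1, the products-to-joints matrix B_t is invertible. -/
theorem stmt_5 (t : ℕ) (ht : 1 ≤ t) : IsUnit (Bmat t) := by
  have h2t : (2 : ℝ) ^ t ≠ 0 := by positivity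
  set M : Matrix (Fin t → Fin 2) (Fin t → Fin 2) ℝ :=
    (2 / 2 ^ t : ℝ) • kronPow t - Smat t with hM
  have hmul : Bmat t * M = 1 := by
    have hB : Bmat t = (1 / 2 : ℝ) • kronPow t + (1 / 2 : ℝ) • Jmat t := rfl
    rw [hB, hM]
    rw [add_mul, Matrix.smul_mul, Matrix.smul_mul, Matrix.mul_sub, Matrix.mul_sub,
      Matrix.mul_smul, Matrix.mul_smul, KK t, JK t, KS t, JS t]
    simp only [smul_smul]
    have e1 : (2 / 2 ^ t : ℝ) * 2 ^ t = 2 := by field_simp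
    rw [e1]
    module
  exact (Matrix.isUnit_iff_isUnit_det _).mpr (Matrix.isUnit_det_of_right_inverse hmul)
end

section
/- Let Y, λ_1, λ_2, λ_3 be {-1,1}-valued random variables such that λ_1·Y, λ_2·Y, λ_3·Y are mutually independent with nonzero expectations a_1, a_2, a_3. Then E[λ_i · λ_j] = a_i · a_j for all i ≠ j, and consequently a_1^2 = E[λ_1 λ_2]·E[λ_1 λ_3] / E[λ_2 λ_3]. -/
open MeasureTheory ProbabilityTheory

/-- If the agreement variables a_i = λ_i·Y of three {-1,1}-valued sources are
mutually independent with nonzero expectations a_i, then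
E[λ_i λ_j] = E[a_i]·E[a_j] for i ≠ j, and consequently
E[a₀]² = E[λ₀λ₁]·E[λ₀λ₂] / E[λ₁λ₂]. -/
theorem stmt_12 {Ω : Type*} [MeasurableSpace Ω] (μ : Measure Ω)
    [IsProbabilityMeasure μ] (Y : Ω → ℝ) (lam : Fin 3 → Ω → ℝ)
    (hY : ∀ ω, Y ω = 1 ∨ Y ω = -1)
    (hlam : ∀ i ω, lam i ω = 1 ∨ lam i ω = -1)
    (hmeas : Measurable Y) (hmeasl : ∀ i, Measurable (lam i))
    (hindep : iIndepFun
      (fun i ω => lam i ω * Y ω) μ)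
    (hne : ∀ i, (∫ ω, lam i ω * Y ω ∂μ) ≠ 0) :
    (∀ i j, i ≠ j →
      (∫ ω, lam i ω * lam j ω ∂μ) =
        (∫ ω, lam i ω * Y ω ∂μ) * (∫ ω, lam j ω * Y ω ∂μ)) ∧
    (∫ ω, lam 0 ω * Y ω ∂μ) ^ 2 =
      (∫ ω, lam 0 ω * lam 1 ω ∂μ) * (∫ ω, lam 0 ω * lam 2 ω ∂μ) /
        (∫ ω, lam 1 ω * lam 2 ω ∂μ) := by
  have hY2 : ∀ ω, Y ω * Y ω = 1 := by
    intro ω; rcases hY ω with h | h <;> rw [h] <;> ring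
  have hfm : ∀ i, Measurable (fun ω => lam i ω * Y ω) :=
    fun i => (hmeasl i).mul hmeas
  have hint : ∀ i, Integrable (fun ω => lam i ω * Y ω) μ := by
    intro i
    refine (integrable_const (1 : ℝ)).mono' (hfm i).aestronglyMeasurable ?_
    filter_upwards with ω
    rcases hlam i ω with h | h <;> rcases hY ω with h' | h' <;>
      simp [h, h']
  have key : ∀ i j, i ≠ j →
      (∫ ω, lam i ω * lam j ω ∂μ) =
        (∫ ω, lam i ω * Y ω ∂μ) * (∫ ω, lam j ω * Y ω ∂μ) := by
    intro i j hij
    have hIndep : IndepFun (fun ω => lam i ω * Y ω)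
        (fun ω => lam j ω * Y ω) μ := hindep.indepFun hij
    have := ProbabilityTheory.IndepFun.integral_mul_eq_mul_integral hIndep (hint i).aestronglyMeasurable
      (hint j).aestronglyMeasurable
    rw [← this]
    congr 1
    funext ω
    simp only [Pi.mul_apply]
    rw [mul_mul_mul_comm, hY2, mul_one]
  refine ⟨key, ?_⟩
  rw [key 0 1 (by decide), key 0 2 (by decide), key 1 2 (by decide)]
  have h1 := hne 1
  have h2 := hne 2
  field_simp
end

section
/- Let Y, λ_1, λ_2, λ_3 be {-1,1}-valued random variables such that a_i := λ_i·Y are mutually independent with E[a_i] ≠ 0 for each i, and suppose additionally that E[a_1] + E[a_2] + E[a_3] > 0. Then the signs of E[a_1], E[a_2], E[a_3] are uniquely determined by the observable quantities E[λ_1λ_2], E[λ_1λ_3], E[λ_2λ_3]. -/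
open MeasureTheory ProbabilityTheory

/-- Pure algebra: pairwise products determine the triple up to global sign,
and the positive-sum condition fixes the sign. -/
lemma alg_aux (a0 a1 a2 b0 b1 b2 : ℝ) (ha0 : a0 ≠ 0) (ha1 : a1 ≠ 0)
    (ha2 : a2 ≠ 0) (h01 : a0 * a1 = b0 * b1) (h02 : a0 * a2 = b0 * b2)
    (h12 : a1 * a2 = b1 * b2) (hsa : 0 < a0 + a1 + a2)
    (hsb : 0 < b0 + b1 + b2) : a0 = b0 ∧ a1 = b1 ∧ a2 = b2 := by
  have hb0 : b0 ≠ 0 := by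
    intro h; apply mul_ne_zero ha0 ha1; rw [h01, h]; ring
  have hsq : a0 ^ 2 = b0 ^ 2 := by
    have h : a0 ^ 2 * (a1 * a2) = b0 ^ 2 * (a1 * a2) := by
      linear_combination a0 * a2 * h01 + b0 * b1 * h02 - b0 ^ 2 * h12
    exact mul_right_cancel₀ (mul_ne_zero ha1 ha2) h
  rcases sq_eq_sq_iff_eq_or_eq_neg.mp hsq with h | h
  · refine ⟨h, ?_, ?_⟩
    · apply mul_left_cancel₀ hb0; rw [← h01, h]
    · apply mul_left_cancel₀ hb0; rw [← h02, h]
  · exfalso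
    have h1 : a1 = -b1 := by
      apply mul_left_cancel₀ hb0
      have : a0 * a1 = b0 * b1 := h01
      rw [h] at this; linarith [this]
    have h2 : a2 = -b2 := by
      apply mul_left_cancel₀ hb0
      have : a0 * a2 = b0 * b2 := h02
      rw [h] at this; linarith [this]
    rw [h, h1, h2] at hsa; linarith

/-- Sign recovery: if a_i := λ_i·Y (for {-1,1}-valued Y, λ_i) are mutually
independent with nonzero means and E[a₁]+E[a₂]+E[a₃] > 0, then the means
E[a_i] are uniquely determined by the observables E[λ_iλ_j]: any triple of
nonzero reals with positive sum reproducing the pairwise products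
E[λ_iλ_j] = E[a_i]E[a_j] must equal (E[a₁], E[a₂], E[a₃]). -/
theorem stmt_13 {Ω : Type*} [MeasurableSpace Ω] (μ : Measure Ω)
    [IsProbabilityMeasure μ] (Y : Ω → ℝ) (lam : Fin 3 → Ω → ℝ)
    (hY : ∀ ω, Y ω = 1 ∨ Y ω = -1)
    (hlam : ∀ i ω, lam i ω = 1 ∨ lam i ω = -1)
    (hmeas : Measurable Y) (hmeasl : ∀ i, Measurable (lam i))
    (hindep : iIndepFun
      (fun i ω => lam i ω * Y ω) μ)
    (hne : ∀ i, (∫ ω, lam i ω * Y ω ∂μ) ≠ 0)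
    (hsum : 0 < (∫ ω, lam 0 ω * Y ω ∂μ) + (∫ ω, lam 1 ω * Y ω ∂μ) +
      (∫ ω, lam 2 ω * Y ω ∂μ)) :
    ∀ a : Fin 3 → ℝ, (∀ i, a i ≠ 0) → 0 < a 0 + a 1 + a 2 →
      (∀ i j, i ≠ j → a i * a j = ∫ ω, lam i ω * lam j ω ∂μ) →
      ∀ i, a i = ∫ ω, lam i ω * Y ω ∂μ := by
  intro a hane hasum hprod
  set X : Fin 3 → Ω → ℝ := fun i ω => lam i ω * Y ω with hXdef
  have hXmeas : ∀ i, Measurable (X i) := fun i => (hmeasl i).mul hmeas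
  have hXval : ∀ i ω, X i ω = 1 ∨ X i ω = -1 := by
    intro i ω
    rcases hlam i ω with h | h <;> rcases hY ω with h' | h' <;>
      simp [X, h, h']
  have hXint : ∀ i, Integrable (X i) μ := by
    intro i
    refine (integrable_const (1 : ℝ)).mono' (hXmeas i).aestronglyMeasurable
      (Filter.Eventually.of_forall fun ω => ?_)
    rcases hXval i ω with h | h <;> simp [h]
  have hkey : ∀ i j, i ≠ j →
      (∫ ω, lam i ω * lam j ω ∂μ) = (∫ ω, X i ω ∂μ) * (∫ ω, X j ω ∂μ) := by
    intro i j hij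
    have hI : IndepFun (X i) (X j) μ := hindep.indepFun hij
    rw [← IndepFun.integral_fun_mul_eq_mul_integral hI (hXmeas i).aestronglyMeasurable (hXmeas j).aestronglyMeasurable]
    apply integral_congr_ae
    filter_upwards with ω
    show lam i ω * lam j ω = X i ω * X j ω
    rcases hY ω with h | h <;> simp [X, h] <;> ring
  -- set up the algebra
  have h01 := (hprod 0 1 (by decide)).trans (hkey 0 1 (by decide))
  have h02 := (hprod 0 2 (by decide)).trans (hkey 0 2 (by decide))
  have h12 := (hprod 1 2 (by decide)).trans (hkey 1 2 (by decide))
  obtain ⟨e0, e1, e2⟩ := alg_aux (a 0) (a 1) (a 2) (∫ ω, X 0 ω ∂μ)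
    (∫ ω, X 1 ω ∂μ) (∫ ω, X 2 ω ∂μ) (hane 0) (hane 1) (hane 2)
    h01 h02 h12 hasum hsum
  intro i
  fin_cases i <;> assumption
end
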